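/- (Misreport utility upper bound.) Fix a bidder i, her true valuation vᵢ, and bids b_{-i} of the other bidders. For any bid bᵢ' of bidder i, let b' be the profile in which bidder i bids bᵢ' and the others bid b_{-i}, and let b be the truthful profile (vᵢ, b_{-i}). Then for every allocation A' maximizing AW(b', ·) over Alloc, bidder i's utility from misreporting is bounded by vᵢ(A' i) − pᵢ(b', A') ≤ (1 / w i) * ((max over A ∈ Alloc of AW(b, A)) − (max over A ∈ Alloc of AW₋ᵢ(b, A))). -/

import Mathlib

open Finset

noncomputable section

/-- The finite set of allocations: functions assigning each bidder a bundle of items,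
with pairwise disjoint bundles. -/
def Alloc (n m : ℕ) : Finset (Fin n → Finset (Fin m)) :=
  Finset.univ.filter fun A => ∀ j k : Fin n, j ≠ k → Disjoint (A j) (A k)

lemma Alloc_nonempty (n m : ℕ) : (Alloc n m).Nonempty :=
  ⟨fun _ => ∅, by simp [Alloc]⟩

/-- Affine welfare of allocation `A` under bid profile `b`. -/
def AW {n m : ℕ} (w : Fin n → ℝ) (lam : (Fin n → Finset (Fin m)) → ℝ)
    (b : Fin n → Finset (Fin m) → ℝ) (A : Fin n → Finset (Fin m)) : ℝ :=
  (∑ i, w i * b i (A i)) + lam A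

/-- Affine welfare of allocation `A` under bid profile `b`, excluding bidder `i`. -/
def AWmi {n m : ℕ} (w : Fin n → ℝ) (lam : (Fin n → Finset (Fin m)) → ℝ)
    (b : Fin n → Finset (Fin m) → ℝ) (i : Fin n) (A : Fin n → Finset (Fin m)) : ℝ :=
  (∑ j ∈ Finset.univ.erase i, w j * b j (A j)) + lam A

/-- AMA payment of bidder `i` under bid profile `b`, given winning allocation `Astar`. -/
def pay {n m : ℕ} (w : Fin n → ℝ) (lam : (Fin n → Finset (Fin m)) → ℝ)
    (b : Fin n → Finset (Fin m) → ℝ) (i : Fin n) (Astar : Fin n → Finset (Fin m)) : ℝ :=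
  (1 / w i) * ((Alloc n m).sup' (Alloc_nonempty n m) (AWmi w lam b i) - AWmi w lam b i Astar)

end

section

variable {n m : ℕ} (w : Fin n → ℝ) (lam : (Fin n → Finset (Fin m)) → ℝ)
  (b : Fin n → Finset (Fin m) → ℝ) (i : Fin n)

theorem AWmi_update_self (x : Finset (Fin m) → ℝ) :
    AWmi w lam (Function.update b i x) i = AWmi w lam b i := by
  funext A
  unfold AWmi
  congr 1
  refine Finset.sum_congr rfl fun j hj => ?_
  rw [Function.update_of_ne (Finset.ne_of_mem_erase hj)]

theorem pay_update_self (x : Finset (Fin m) → ℝ) :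
    pay w lam (Function.update b i x) i = pay w lam b i := by
  funext A
  simp only [pay, AWmi_update_self]

theorem AW_eq_mul_add_AWmi (A : Fin n → Finset (Fin m)) :
    AW w lam b A = w i * b i (A i) + AWmi w lam b i A := by
  rw [AW, AWmi, ← Finset.add_sum_erase _ _ (Finset.mem_univ i)]
  ring

theorem sub_pay_eq_one_div_mul (hwi : w i ≠ 0) (A : Fin n → Finset (Fin m)) :
    b i (A i) - pay w lam b i A =
      (1 / w i) * (AW w lam b A - (Alloc n m).sup' (Alloc_nonempty n m) (AWmi w lam b i)) := by
  rw [pay, AW_eq_mul_add_AWmi w lam b i A]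
  field_simp
  ring

end

theorem AMA_misreport_utility_le_general {n m : ℕ} (w : Fin n → ℝ) (hw : ∀ i, 0 < w i)
    (lam : (Fin n → Finset (Fin m)) → ℝ) (i : Fin n)
    (vi : Finset (Fin m) → ℝ) (bmi : Fin n → Finset (Fin m) → ℝ)
    (bi' : Finset (Fin m) → ℝ)
    (A' : Fin n → Finset (Fin m)) (hA' : A' ∈ Alloc n m) :
    vi (A' i) - pay w lam (Function.update bmi i bi') i A' ≤
      (1 / w i) *
        ((Alloc n m).sup' (Alloc_nonempty n m) (AW w lam (Function.update bmi i vi)) -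
          (Alloc n m).sup' (Alloc_nonempty n m) (AWmi w lam (Function.update bmi i vi) i)) := by
  -- The payment does not depend on bidder `i`'s own bid, so it may be computed at the truthful profile.
  have htruthful := sub_pay_eq_one_div_mul w lam (Function.update bmi i vi) i (hw i).ne' A'
  rw [Function.update_self] at htruthful
  rw [pay_update_self, ← pay_update_self w lam bmi i vi, htruthful]
  have hpos : 0 ≤ 1 / w i := (one_div_pos.mpr (hw i)).le
  gcongr
  exact Finset.le_sup' _ hA'

/-- **Misreport utility upper bound.** For any misreport `bi'` of bidder `i` and
any maximizer `A'` of the misreport profile, the misreport utility is at most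
`(1 / w i) * (max_A AW(b, A) − max_A AW₋ᵢ(b, A))` where `b` is the truthful profile. -/
theorem AMA_misreport_utility_le {n m : ℕ} (w : Fin n → ℝ) (hw : ∀ i, 0 < w i)
    (lam : (Fin n → Finset (Fin m)) → ℝ) (i : Fin n)
    (vi : Finset (Fin m) → ℝ) (bmi : Fin n → Finset (Fin m) → ℝ)
    (bi' : Finset (Fin m) → ℝ)
    (A' : Fin n → Finset (Fin m)) (hA' : A' ∈ Alloc n m)
    (hmax' : ∀ A ∈ Alloc n m,
      AW w lam (Function.update bmi i bi') A ≤ AW w lam (Function.update bmi i bi') A') :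
    vi (A' i) - pay w lam (Function.update bmi i bi') i A' ≤
      (1 / w i) *
        ((Alloc n m).sup' (Alloc_nonempty n m) (AW w lam (Function.update bmi i vi)) -
          (Alloc n m).sup' (Alloc_nonempty n m) (AWmi w lam (Function.update bmi i vi) i)) :=
  AMA_misreport_utility_le_general w hw lam i vi bmi bi' A' hA'
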